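/- arXiv:2112.03804 — 6 statements merged into one kernel-verified Lean document; each statement's English description precedes it below -/
import Mathlib

section
/- Let H₁, H₂, R, C be finite nonempty index types, let μ₁ : H₁ → ℝ and μ₂ : H₂ → ℝ, let β > 0 be a real number, let incompat : H₁ → H₂ → Prop be a decidable predicate, and let γ : H₁ → H₂ → ℝ satisfy γ h₁ h₂ = 0 whenever incompat h₁ h₂ holds. Let F, S : Matrix R C ℝ. Define π h₁ h₂ := if incompat h₁ h₂ then 0 else μ₁ h₁ * μ₂ h₂ / β, define λᵢ hᵢ := μᵢ hᵢ / Real.sqrt β, let Λ₁ := Matrix.diagonal λ₁ and Λ₂ := Matrix.diagonal λ₂, let W : Matrix H₁ H₂ ℝ be W h₁ h₂ := γ h₁ h₂, let H× : Matrix H₁ H₂ ℝ be H× h₁ h₂ := if incompat h₁ h₂ then 1 else 0, and let Cmat := (Matrix.of (fun h₁ h₂ => λ₁ h₁ * λ₂ h₂)) - Λ₁ * H× * Λ₂. Then the block payoff matrix A : Matrix (H₁ × R) (H₂ × C) ℝ defined by A (h₁, r) (h₂, c) := π h₁ h₂ * (F r c + γ h₁ h₂ * S r c) satisfies A = Cmat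 ⊗ F + (Λ₁ * W * Λ₂) ⊗ S. -/
/-!
Since `λ₁ h₁ * λ₂ h₂ = μ₁ h₁ * μ₂ h₂ / β`, the matrix `Cmat` is `π` itself: subtracting
`Λ₁ H× Λ₂` zeroes exactly the incompatible entries. Likewise `Λ₁ W Λ₂` is `π * γ` entrywise,
because `γ` vanishes wherever the mask does. The payoff `π F + π γ S` then splits blockwise
into the two Kronecker products.
-/

open Matrix Kronecker

theorem Real.div_sqrt_mul_div_sqrt {β : ℝ} (hβ : 0 ≤ β) (a b : ℝ) :
    a / √β * (b / √β) = a * b / β := by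
  rw [div_mul_div_comm, Real.mul_self_sqrt hβ]

theorem Matrix.diagonal_mul_mul_diagonal_apply {m n α : Type*} [Fintype m] [Fintype n]
    [DecidableEq m] [DecidableEq n] [NonUnitalNonAssocSemiring α]
    (d₁ : m → α) (M : Matrix m n α) (d₂ : n → α) (i : m) (j : n) :
    (diagonal d₁ * M * diagonal d₂) i j = d₁ i * M i j * d₂ j := by
  rw [mul_diagonal, diagonal_mul]

theorem Matrix.eq_kronecker_add_kronecker {l m n p α : Type*} [Mul α] [Add α]
    {A : Matrix (l × n) (m × p) α} {P Q : Matrix l m α} {F S : Matrix n p α}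
    (hA : ∀ i r j c, A (i, r) (j, c) = P i j * F r c + Q i j * S r c) :
    A = P ⊗ₖ F + Q ⊗ₖ S := by
  ext ⟨i, r⟩ ⟨j, c⟩
  exact hA i r j c

theorem river_endgame_kronecker_decomposition_general
    {H₁ H₂ R C : Type*} [Fintype H₁] [Fintype H₂]
    [DecidableEq H₁] [DecidableEq H₂]
    (μ₁ : H₁ → ℝ) (μ₂ : H₂ → ℝ) (β : ℝ) (hβ : 0 < β)
    (incompat : H₁ → H₂ → Prop) [∀ h₁ h₂, Decidable (incompat h₁ h₂)]
    (γ : H₁ → H₂ → ℝ) (hγ : ∀ h₁ h₂, incompat h₁ h₂ → γ h₁ h₂ = 0)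
    (F S : Matrix R C ℝ)
    (π : H₁ → H₂ → ℝ)
    (hπ : ∀ h₁ h₂, π h₁ h₂ = if incompat h₁ h₂ then 0 else μ₁ h₁ * μ₂ h₂ / β)
    (lam₁ : H₁ → ℝ) (hlam₁ : ∀ h, lam₁ h = μ₁ h / Real.sqrt β)
    (lam₂ : H₂ → ℝ) (hlam₂ : ∀ h, lam₂ h = μ₂ h / Real.sqrt β)
    (W : Matrix H₁ H₂ ℝ) (hW : ∀ h₁ h₂, W h₁ h₂ = γ h₁ h₂)
    (Hx : Matrix H₁ H₂ ℝ)
    (hHx : ∀ h₁ h₂, Hx h₁ h₂ = if incompat h₁ h₂ then 1 else 0)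
    (Cmat : Matrix H₁ H₂ ℝ)
    (hCmat : Cmat = Matrix.of (fun h₁ h₂ => lam₁ h₁ * lam₂ h₂)
        - Matrix.diagonal lam₁ * Hx * Matrix.diagonal lam₂)
    (A : Matrix (H₁ × R) (H₂ × C) ℝ)
    (hA : ∀ h₁ r h₂ c, A (h₁, r) (h₂, c) = π h₁ h₂ * (F r c + γ h₁ h₂ * S r c)) :
    A = Cmat ⊗ₖ F + (Matrix.diagonal lam₁ * W * Matrix.diagonal lam₂) ⊗ₖ S := by
  have hlam : ∀ h₁ h₂, lam₁ h₁ * lam₂ h₂ = μ₁ h₁ * μ₂ h₂ / β := fun h₁ h₂ => by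
    rw [hlam₁, hlam₂, Real.div_sqrt_mul_div_sqrt hβ.le]
  have hCmat_apply : ∀ h₁ h₂, Cmat h₁ h₂ = π h₁ h₂ := fun h₁ h₂ => by
    rw [hCmat, Matrix.sub_apply, of_apply, diagonal_mul_mul_diagonal_apply, hHx, hπ, ← hlam]
    split_ifs <;> ring
  have hW_apply : ∀ h₁ h₂,
      (diagonal lam₁ * W * diagonal lam₂) h₁ h₂ = π h₁ h₂ * γ h₁ h₂ := fun h₁ h₂ => by
    rw [diagonal_mul_mul_diagonal_apply, hW, hπ, ← hlam]
    split_ifs with h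
    · simp [hγ h₁ h₂ h]
    · ring
  refine eq_kronecker_add_kronecker fun h₁ r h₂ c => ?_
  rw [hA, hCmat_apply, hW_apply]
  ring

/-- Proposition 1: Kronecker-product decomposition of the payoff matrix of a
poker river endgame. -/
theorem river_endgame_kronecker_decomposition
    {H₁ H₂ R C : Type*} [Fintype H₁] [Fintype H₂] [Fintype R] [Fintype C]
    [Nonempty H₁] [Nonempty H₂] [Nonempty R] [Nonempty C]
    [DecidableEq H₁] [DecidableEq H₂]
    (μ₁ : H₁ → ℝ) (μ₂ : H₂ → ℝ) (β : ℝ) (hβ : 0 < β)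
    (incompat : H₁ → H₂ → Prop) [∀ h₁ h₂, Decidable (incompat h₁ h₂)]
    (γ : H₁ → H₂ → ℝ) (hγ : ∀ h₁ h₂, incompat h₁ h₂ → γ h₁ h₂ = 0)
    (F S : Matrix R C ℝ)
    (π : H₁ → H₂ → ℝ)
    (hπ : ∀ h₁ h₂, π h₁ h₂ = if incompat h₁ h₂ then 0 else μ₁ h₁ * μ₂ h₂ / β)
    (lam₁ : H₁ → ℝ) (hlam₁ : ∀ h, lam₁ h = μ₁ h / Real.sqrt β)
    (lam₂ : H₂ → ℝ) (hlam₂ : ∀ h, lam₂ h = μ₂ h / Real.sqrt β)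
    (W : Matrix H₁ H₂ ℝ) (hW : ∀ h₁ h₂, W h₁ h₂ = γ h₁ h₂)
    (Hx : Matrix H₁ H₂ ℝ)
    (hHx : ∀ h₁ h₂, Hx h₁ h₂ = if incompat h₁ h₂ then 1 else 0)
    (Cmat : Matrix H₁ H₂ ℝ)
    (hCmat : Cmat = Matrix.of (fun h₁ h₂ => lam₁ h₁ * lam₂ h₂)
        - Matrix.diagonal lam₁ * Hx * Matrix.diagonal lam₂)
    (A : Matrix (H₁ × R) (H₂ × C) ℝ)
    (hA : ∀ h₁ r h₂ c, A (h₁, r) (h₂, c) = π h₁ h₂ * (F r c + γ h₁ h₂ * S r c)) :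
    A = Cmat ⊗ₖ F + (Matrix.diagonal lam₁ * W * Matrix.diagonal lam₂) ⊗ₖ S :=
  river_endgame_kronecker_decomposition_general μ₁ μ₂ β hβ incompat γ hγ F S π hπ lam₁ hlam₁ lam₂
    hlam₂ W hW Hx hHx Cmat hCmat A hA
end

section
/- Let H₁, H₂, R, C be finite index types, let λ₁ : H₁ → ℝ and λ₂ : H₂ → ℝ, let Λ₁ := Matrix.diagonal λ₁ and Λ₂ := Matrix.diagonal λ₂, let H× : Matrix H₁ H₂ ℝ, let F : Matrix R C ℝ, and define Cmat := (Matrix.of (fun h₁ h₂ => λ₁ h₁ * λ₂ h₂)) - Λ₁ * H× * Λ₂. Regard λ₁ as the single-column matrix u : Matrix H₁ (Fin 1) ℝ, u h _ := λ₁ h, and λ₂ as v : Matrix H₂ (Fin 1) ℝ, v h _ := λ₂ h. Then Cmat ⊗ F = -((Λ₁ * H× * Λ₂) ⊗ F) + (u ⊗ (1 : Matrix R R ℝ)) * (v ⊗ Fᵀ)ᵀ, as matrices in Matrix (H₁ × R) (H₂ × C) ℝ (after the canonical reindexing identifying H₁ × (R × Fin 1) with H₁ × R via the product with Fin 1, i.e.,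 identifying (Fin 1) × R with R and (Fin 1) × C with C in the Kronecker index types). -/
open Matrix Kronecker

theorem Matrix.mul_transpose_kronecker {α l m n p q : Type*} [CommSemiring α] [Fintype m]
    [Fintype n] [DecidableEq n] (A : Matrix l m α) (B : Matrix p m α) (F : Matrix n q α) :
    (A * Bᵀ) ⊗ₖ F = (A ⊗ₖ (1 : Matrix n n α)) * (B ⊗ₖ Fᵀ)ᵀ := by
  rw [← kroneckerMap_transpose, transpose_transpose, ← mul_kronecker_mul, Matrix.one_mul]

theorem cf_kronecker_sparsification_general
    {H₁ H₂ R C : Type*} [Fintype H₁] [Fintype H₂] [Fintype R]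
    [DecidableEq H₁] [DecidableEq H₂] [DecidableEq R]
    (lam₁ : H₁ → ℝ) (lam₂ : H₂ → ℝ)
    (Hx : Matrix H₁ H₂ ℝ) (F : Matrix R C ℝ)
    (Cmat : Matrix H₁ H₂ ℝ)
    (hCmat : Cmat = Matrix.of (fun h₁ h₂ => lam₁ h₁ * lam₂ h₂)
        - Matrix.diagonal lam₁ * Hx * Matrix.diagonal lam₂)
    (u : Matrix H₁ (Fin 1) ℝ) (hu : ∀ h i, u h i = lam₁ h)
    (v : Matrix H₂ (Fin 1) ℝ) (hv : ∀ h i, v h i = lam₂ h) :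
    Cmat ⊗ₖ F =
      -((Matrix.diagonal lam₁ * Hx * Matrix.diagonal lam₂) ⊗ₖ F)
        + (u ⊗ₖ (1 : Matrix R R ℝ)) * (v ⊗ₖ Fᵀ)ᵀ := by
  obtain rfl : u = replicateCol (Fin 1) lam₁ := Matrix.ext hu
  obtain rfl : v = replicateCol (Fin 1) lam₂ := Matrix.ext hv
  have rank_one : Matrix.of (fun h₁ h₂ => lam₁ h₁ * lam₂ h₂) =
      replicateCol (Fin 1) lam₁ * (replicateCol (Fin 1) lam₂)ᵀ := by
    rw [transpose_replicateCol]
    exact vecMulVec_eq (Fin 1) lam₁ lam₂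
  rw [eq_neg_add_iff_add_eq, ← add_kronecker, hCmat, add_sub_cancel, rank_one,
    mul_transpose_kronecker]

/-- Equation (3): sparsification of the term C ⊗ F via the rank-one pull-out. -/
theorem cf_kronecker_sparsification
    {H₁ H₂ R C : Type*} [Fintype H₁] [Fintype H₂] [Fintype R] [Fintype C]
    [DecidableEq H₁] [DecidableEq H₂] [DecidableEq R]
    (lam₁ : H₁ → ℝ) (lam₂ : H₂ → ℝ)
    (Hx : Matrix H₁ H₂ ℝ) (F : Matrix R C ℝ)
    (Cmat : Matrix H₁ H₂ ℝ)
    (hCmat : Cmat = Matrix.of (fun h₁ h₂ => lam₁ h₁ * lam₂ h₂)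
        - Matrix.diagonal lam₁ * Hx * Matrix.diagonal lam₂)
    (u : Matrix H₁ (Fin 1) ℝ) (hu : ∀ h i, u h i = lam₁ h)
    (v : Matrix H₂ (Fin 1) ℝ) (hv : ∀ h i, v h i = lam₂ h) :
    Cmat ⊗ₖ F =
      -((Matrix.diagonal lam₁ * Hx * Matrix.diagonal lam₂) ⊗ₖ F)
        + (u ⊗ₖ (1 : Matrix R R ℝ)) * (v ⊗ₖ Fᵀ)ᵀ :=
  cf_kronecker_sparsification_general lam₁ lam₂ Hx F Cmat hCmat u hu v hv
end

section
/- Let H₁, H₂, R, C, K be finite index types, let λ₁ : H₁ → ℝ and λ₂ : H₂ → ℝ with Λ₁ := Matrix.diagonal λ₁ and Λ₂ := Matrix.diagonal λ₂, let F, S : Matrix R C ℝ, let H× : Matrix H₁ H₂ ℝ, define Cmat := (Matrix.of (fun h₁ h₂ => λ₁ h₁ * λ₂ h₂)) - Λ₁ * H× * Λ₂, let A := Cmat ⊗ F + (Λ₁ * W * Λ₂) ⊗ S for W : Matrix H₁ H₂ ℝ, and suppose W = Ŵ + U_W * V_Wᵀ for Ŵ : Matrix H₁ H₂ ℝ, U_W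 : Matrix H₁ K ℝ, V_W : Matrix H₂ K ℝ. Regard λ₁ as the single-column matrix u : Matrix H₁ (Fin 1) ℝ and λ₂ as v : Matrix H₂ (Fin 1) ℝ. Then, after the canonical reindexings of Kronecker index types, A = ((Λ₁ * Ŵ * Λ₂) ⊗ S − (Λ₁ * H× * Λ₂) ⊗ F) + ((Λ₁ * U_W) ⊗ (1 : Matrix R R ℝ)) * ((Λ₂ * V_W) ⊗ Sᵀ)ᵀ + (u ⊗ (1 : Matrix R R ℝ)) * (v ⊗ Fᵀ)ᵀ. -/
/-!
The rank-one matrix `(λ₁ h₁ λ₂ h₂)` inside `C` is `u vᵀ`, and since `Λ₂` is symmetric the low-rank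
part of `W` contributes `(Λ₁ U_W) (Λ₂ V_W)ᵀ`. The mixed-product rule `(P ⊗ 1) (Q ⊗ Xᵀ)ᵀ = (P Qᵀ) ⊗ X`
turns the Kronecker terms `(u vᵀ) ⊗ F` and `((Λ₁ U_W) (Λ₂ V_W)ᵀ) ⊗ S` into the two displayed
products, and bilinearity of `⊗` collects what remains into `Â`.
-/

open Matrix Kronecker

namespace Matrix

variable {l m n p l' n' α : Type*}

theorem sub_kronecker [NonUnitalNonAssocRing α] (A₁ A₂ : Matrix l m α) (B : Matrix n p α) :
    (A₁ - A₂) ⊗ₖ B = A₁ ⊗ₖ B - A₂ ⊗ₖ B :=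
  ext fun _ _ => sub_mul _ _ _

theorem kronecker_mul_transpose_kronecker [Fintype m] [Fintype n] [CommSemiring α]
    (A : Matrix l m α) (B : Matrix l' n α) (C : Matrix p m α) (D : Matrix n' n α) :
    A ⊗ₖ B * (C ⊗ₖ D)ᵀ = (A * Cᵀ) ⊗ₖ (B * Dᵀ) := by
  rw [← kroneckerMap_transpose, mul_kronecker_mul]

theorem kronecker_one_mul_transpose_kronecker [Fintype m] [Fintype n] [DecidableEq n]
    [CommSemiring α] (A : Matrix l m α) (C : Matrix p m α) (D : Matrix n n' α) :
    A ⊗ₖ (1 : Matrix n n α) * (C ⊗ₖ Dᵀ)ᵀ = (A * Cᵀ) ⊗ₖ D := by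
  rw [kronecker_mul_transpose_kronecker, transpose_transpose, Matrix.one_mul]

end Matrix

theorem techniqueA_full_sparsification_general
    {H₁ H₂ R C K : Type*} [Fintype H₁] [Fintype H₂] [Fintype R] [Fintype K]
    [DecidableEq H₁] [DecidableEq H₂] [DecidableEq R]
    (lam₁ : H₁ → ℝ) (lam₂ : H₂ → ℝ)
    (F S : Matrix R C ℝ) (Hx : Matrix H₁ H₂ ℝ)
    (Cmat : Matrix H₁ H₂ ℝ)
    (hCmat : Cmat = Matrix.of (fun h₁ h₂ => lam₁ h₁ * lam₂ h₂)
        - Matrix.diagonal lam₁ * Hx * Matrix.diagonal lam₂)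
    (W What : Matrix H₁ H₂ ℝ) (UW : Matrix H₁ K ℝ) (VW : Matrix H₂ K ℝ)
    (hW : W = What + UW * VWᵀ)
    (A : Matrix (H₁ × R) (H₂ × C) ℝ)
    (hA : A = Cmat ⊗ₖ F + (Matrix.diagonal lam₁ * W * Matrix.diagonal lam₂) ⊗ₖ S)
    (u : Matrix H₁ (Fin 1) ℝ) (hu : ∀ h i, u h i = lam₁ h)
    (v : Matrix H₂ (Fin 1) ℝ) (hv : ∀ h i, v h i = lam₂ h) :
    A = ((Matrix.diagonal lam₁ * What * Matrix.diagonal lam₂) ⊗ₖ S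
            - (Matrix.diagonal lam₁ * Hx * Matrix.diagonal lam₂) ⊗ₖ F)
        + ((Matrix.diagonal lam₁ * UW) ⊗ₖ (1 : Matrix R R ℝ))
            * ((Matrix.diagonal lam₂ * VW) ⊗ₖ Sᵀ)ᵀ
        + (u ⊗ₖ (1 : Matrix R R ℝ)) * (v ⊗ₖ Fᵀ)ᵀ := by
  have hu_col : u = replicateCol (Fin 1) lam₁ := ext fun h i => hu h i
  have hv_col : v = replicateCol (Fin 1) lam₂ := ext fun h i => hv h i
  have hrank_one : Matrix.of (fun h₁ h₂ => lam₁ h₁ * lam₂ h₂) = u * vᵀ := by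
    rw [hu_col, hv_col, transpose_replicateCol]
    exact vecMulVec_eq (Fin 1) lam₁ lam₂
  have hlow_rank : diagonal lam₁ * (UW * VWᵀ) * diagonal lam₂
      = diagonal lam₁ * UW * (diagonal lam₂ * VW)ᵀ := by
    rw [transpose_mul, diagonal_transpose, Matrix.mul_assoc, Matrix.mul_assoc, Matrix.mul_assoc]
  rw [hA, hCmat, hW, kronecker_one_mul_transpose_kronecker, kronecker_one_mul_transpose_kronecker,
    ← hrank_one, ← hlow_rank, sub_kronecker, Matrix.mul_add, Matrix.add_mul, add_kronecker]
  abel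

/-- The full sparsification produced by Technique A. -/
theorem techniqueA_full_sparsification
    {H₁ H₂ R C K : Type*} [Fintype H₁] [Fintype H₂] [Fintype R] [Fintype C] [Fintype K]
    [DecidableEq H₁] [DecidableEq H₂] [DecidableEq R]
    (lam₁ : H₁ → ℝ) (lam₂ : H₂ → ℝ)
    (F S : Matrix R C ℝ) (Hx : Matrix H₁ H₂ ℝ)
    (Cmat : Matrix H₁ H₂ ℝ)
    (hCmat : Cmat = Matrix.of (fun h₁ h₂ => lam₁ h₁ * lam₂ h₂)
        - Matrix.diagonal lam₁ * Hx * Matrix.diagonal lam₂)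
    (W What : Matrix H₁ H₂ ℝ) (UW : Matrix H₁ K ℝ) (VW : Matrix H₂ K ℝ)
    (hW : W = What + UW * VWᵀ)
    (A : Matrix (H₁ × R) (H₂ × C) ℝ)
    (hA : A = Cmat ⊗ₖ F + (Matrix.diagonal lam₁ * W * Matrix.diagonal lam₂) ⊗ₖ S)
    (u : Matrix H₁ (Fin 1) ℝ) (hu : ∀ h i, u h i = lam₁ h)
    (v : Matrix H₂ (Fin 1) ℝ) (hv : ∀ h i, v h i = lam₂ h) :
    A = ((Matrix.diagonal lam₁ * What * Matrix.diagonal lam₂) ⊗ₖ S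
            - (Matrix.diagonal lam₁ * Hx * Matrix.diagonal lam₂) ⊗ₖ F)
        + ((Matrix.diagonal lam₁ * UW) ⊗ₖ (1 : Matrix R R ℝ))
            * ((Matrix.diagonal lam₂ * VW) ⊗ₖ Sᵀ)ᵀ
        + (u ⊗ₖ (1 : Matrix R R ℝ)) * (v ⊗ₖ Fᵀ)ᵀ :=
  techniqueA_full_sparsification_general lam₁ lam₂ F S Hx Cmat hCmat W What UW VW hW A hA u hu v hv
end

section
/- Fix n ∈ ℕ with n ≥ 1, let H₂, R, C be finite index types, let λ₁ : Fin n → ℝ and λ₂ : H₂ → ℝ with Λ₁ := Matrix.diagonal λ₁ and Λ₂ := Matrix.diagonal λ₂, let W : Matrix (Fin n) H₂ ℝ and S : Matrix R C ℝ. Let D : Matrix (Fin n) (Fin n) ℝ be D i j := if i = j then 1 else if (j : ℕ) + 1 = (i : ℕ) then −1 else 0, and define Y := D * W. Then (Λ₁ * W * Λ₂) ⊗ S = (Λ₁ ⊗ (1 : Matrix R R ℝ)) * (D ⊗ (1 : Matrix R R ℝ))⁻¹ * ((Λ₂ * Yᵀ) ⊗ Sᵀ)ᵀ, as matrices in Matrix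 (Fin n × R) (H₂ × C) ℝ, where the inverse is Mathlib's Matrix.inv (the matrix D ⊗ 1 is nonsingular since det D = 1). -/
open Matrix Kronecker

/-! Inversion and transposition distribute over `⊗ₖ`, so the right-hand side is
`(Λ₁ ⊗ 1) * (D⁻¹ ⊗ 1) * ((D * W * Λ₂) ⊗ S)`, which the mixed-product rule collapses to
`(Λ₁ * D⁻¹ * D * W * Λ₂) ⊗ S`; and `D⁻¹ * D = 1` because `D` is unitriangular, so `det D = 1`. -/

namespace Matrix

def firstDifference (α : Type*) [Ring α] (n : ℕ) : Matrix (Fin n) (Fin n) α :=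
  of fun i j => if i = j then 1 else if (j : ℕ) + 1 = i then -1 else 0

variable {α : Type*}

theorem firstDifference_isLowerTriangular [Ring α] (n : ℕ) :
    (firstDifference α n).IsLowerTriangular := by
  intro i j hij
  have hij' : (i : ℕ) < j := hij
  rw [firstDifference, of_apply, if_neg (by omega), if_neg (by omega)]

theorem det_firstDifference [CommRing α] (n : ℕ) : (firstDifference α n).det = 1 := by
  rw [det_of_isLowerTriangular _ (firstDifference_isLowerTriangular n)]
  simp [firstDifference]

variable {l m p q r c : Type*} [Fintype m] [DecidableEq m] [Fintype r] [DecidableEq r]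

theorem mul_mul_transpose_kronecker_eq [CommRing α] [Fintype p]
    (A : Matrix l m α) (W : Matrix m p α) (B : Matrix q p α) (S : Matrix r c α)
    {D : Matrix m m α} (hD : IsUnit D.det) :
    (A * W * Bᵀ) ⊗ₖ S = (A ⊗ₖ (1 : Matrix r r α)) * (D ⊗ₖ (1 : Matrix r r α))⁻¹
      * ((B * (D * W)ᵀ) ⊗ₖ Sᵀ)ᵀ := by
  rw [inv_kronecker, inv_one, ← kroneckerMap_transpose, transpose_mul, transpose_transpose,
    transpose_transpose, ← mul_kronecker_mul, ← mul_kronecker_mul]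
  simp only [Matrix.mul_assoc, nonsing_inv_mul_cancel_left _ _ hD, Matrix.one_mul]

end Matrix

theorem techniqueB_showdown_sparsification_general
    (n : ℕ)
    {H₂ R C : Type*} [Fintype H₂] [Fintype R]
    [DecidableEq H₂] [DecidableEq R]
    (lam₁ : Fin n → ℝ) (lam₂ : H₂ → ℝ)
    (W : Matrix (Fin n) H₂ ℝ) (S : Matrix R C ℝ)
    (D : Matrix (Fin n) (Fin n) ℝ)
    (hD : ∀ i j, D i j = if i = j then 1 else if (j : ℕ) + 1 = (i : ℕ) then -1 else 0)
    (Y : Matrix (Fin n) H₂ ℝ) (hY : Y = D * W) :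
    (Matrix.diagonal lam₁ * W * Matrix.diagonal lam₂) ⊗ₖ S =
      (Matrix.diagonal lam₁ ⊗ₖ (1 : Matrix R R ℝ))
        * (D ⊗ₖ (1 : Matrix R R ℝ))⁻¹
        * ((Matrix.diagonal lam₂ * Yᵀ) ⊗ₖ Sᵀ)ᵀ := by
  have hD_eq : D = firstDifference ℝ n := ext fun i j => by
    rw [hD, firstDifference, of_apply]
  have hdet : IsUnit D.det := by
    rw [hD_eq, det_firstDifference]
    exact isUnit_one
  rw [hY, ← mul_mul_transpose_kronecker_eq _ _ _ _ hdet, diagonal_transpose]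

/-- Equation (5): core identity of sparsification Technique B. -/
theorem techniqueB_showdown_sparsification
    (n : ℕ) (hn : 1 ≤ n)
    {H₂ R C : Type*} [Fintype H₂] [Fintype R] [Fintype C]
    [DecidableEq H₂] [DecidableEq R]
    (lam₁ : Fin n → ℝ) (lam₂ : H₂ → ℝ)
    (W : Matrix (Fin n) H₂ ℝ) (S : Matrix R C ℝ)
    (D : Matrix (Fin n) (Fin n) ℝ)
    (hD : ∀ i j, D i j = if i = j then 1 else if (j : ℕ) + 1 = (i : ℕ) then -1 else 0)
    (Y : Matrix (Fin n) H₂ ℝ) (hY : Y = D * W) :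
    (Matrix.diagonal lam₁ * W * Matrix.diagonal lam₂) ⊗ₖ S =
      (Matrix.diagonal lam₁ ⊗ₖ (1 : Matrix R R ℝ))
        * (D ⊗ₖ (1 : Matrix R R ℝ))⁻¹
        * ((Matrix.diagonal lam₂ * Yᵀ) ⊗ₖ Sᵀ)ᵀ :=
  techniqueB_showdown_sparsification_general n lam₁ lam₂ W S D hD Y hY
end

section
/- Let m, p, q, k be finite index types, let A, Â : Matrix m p ℝ, U : Matrix m k ℝ, M : Matrix k k ℝ, V : Matrix p k ℝ, and let F₂ : Matrix q p ℝ. Suppose M is invertible (IsUnit M.det) and A = Â + U * M⁻¹ * Vᵀ. Then for all vectors x : m → ℝ and v : q → ℝ, the following are equivalent: (i) for every i : p, (Aᵀ.mulVec x − F₂ᵀ.mulVec v) i ≥ 0; (ii) there exists w : k → ℝ such that Uᵀ.mulVec x = Mᵀ.mulVec w and for every i : p, (Âᵀ.mulVec x − F₂ᵀ.mulVec v + V.mulVec w) i ≥ 0. -/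
/-! Since `M` is invertible, the equality constraint `Uᵀx = Mᵀw` determines `w = M⁻ᵀUᵀx`
uniquely, and for that `w` we have `Vw = (UM⁻¹Vᵀ)ᵀx`, so `Âᵀx + Vw = Aᵀx`. -/

namespace Matrix

variable {n m p R : Type*} [Fintype n] [Fintype m] [CommRing R]

theorem eq_mulVec_iff_nonsing_inv_mulVec_eq [DecidableEq n] {B : Matrix n n R}
    (hB : IsUnit B.det) {y w : n → R} : y = B *ᵥ w ↔ B⁻¹ *ᵥ y = w := by
  constructor
  · rintro rfl
    rw [mulVec_mulVec, nonsing_inv_mul B hB, one_mulVec]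
  · rintro rfl
    rw [mulVec_mulVec, mul_nonsing_inv B hB, one_mulVec]

theorem transpose_add_mul_mul_transpose_mulVec (Ahat : Matrix m p R) (U : Matrix m n R)
    (N : Matrix n n R) (V : Matrix p n R) (x : m → R) :
    (Ahat + U * N * Vᵀ)ᵀ *ᵥ x = Ahatᵀ *ᵥ x + V *ᵥ (Nᵀ *ᵥ (Uᵀ *ᵥ x)) := by
  rw [transpose_add, add_mulVec, transpose_mul, transpose_mul, transpose_transpose,
    mulVec_mulVec, mulVec_mulVec, Matrix.mul_assoc]

end Matrix

open Matrix

/-- Equivalence of the dense LP constraint Aᵀx − F₂ᵀv ≥ 0 with its sparsified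
reformulation (equation (2)). -/
theorem sparsified_lp_constraint_equivalence
    {m p q k : Type*} [Fintype m] [Fintype p] [Fintype q] [Fintype k]
    [DecidableEq k]
    (A Ahat : Matrix m p ℝ) (U : Matrix m k ℝ) (M : Matrix k k ℝ)
    (V : Matrix p k ℝ) (F₂ : Matrix q p ℝ)
    (hM : IsUnit M.det) (hA : A = Ahat + U * M⁻¹ * Vᵀ)
    (x : m → ℝ) (v : q → ℝ) :
    (∀ i, 0 ≤ (Aᵀ.mulVec x - F₂ᵀ.mulVec v) i) ↔
      ∃ w : k → ℝ, Uᵀ.mulVec x = Mᵀ.mulVec w ∧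
        ∀ i, 0 ≤ (Ahatᵀ.mulVec x - F₂ᵀ.mulVec v + V.mulVec w) i := by
  have hw (w : k → ℝ) : Uᵀ *ᵥ x = Mᵀ *ᵥ w ↔ M⁻¹ᵀ *ᵥ (Uᵀ *ᵥ x) = w := by
    rw [transpose_nonsing_inv]
    exact eq_mulVec_iff_nonsing_inv_mulVec_eq (isUnit_det_transpose M hM)
  simp only [hw, exists_eq_left']
  rw [hA, transpose_add_mul_mul_transpose_mulVec, add_sub_right_comm]
end

section
/- Fix n ∈ ℕ with n ≥ 1, let H₂ be a finite index type, let s₁ : Fin n → ℝ be monotone (i < i' implies s₁ i ≤ s₁ i'), let s₂ : H₂ → ℝ, and define W : Matrix (Fin n) H₂ ℝ by W i h := Real.sign (s₁ i − s₂ h). Then for every h : H₂, the number of indices i : Fin n with (i : ℕ) ≥ 1 at which the row-difference is nonzero, i.e., the cardinality of { i : Fin n | 1 ≤ (i : ℕ) ∧ W i h ≠ W (i − 1) h } (where i − 1 denotes the index with value (i : ℕ) − 1), is at most 2. -/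
/-!
Each column `i ↦ sign (s₁ i - s₂ h)` is monotone with values in `{-1, 0, 1}`. A monotone sequence
is strictly larger at every change point than at all earlier indices, so it is injective on the
change points together with the first index; hence it has fewer change points than values.
-/

theorem Real.sign_monotone : Monotone Real.sign := by
  intro x y hxy
  rcases lt_trichotomy x 0 with hx | rfl | hx
  · rw [Real.sign_of_neg hx]
    rcases Real.sign_apply_eq y with h | h | h <;> rw [h] <;> norm_num
  · rcases hxy.eq_or_lt with rfl | hy
    · rfl
    rw [Real.sign_zero, Real.sign_of_pos hy]
    norm_num
  · rw [Real.sign_of_pos hx, Real.sign_of_pos (hx.trans_le hxy)]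

def Fin.changePoints {α : Type*} [DecidableEq α] {n : ℕ} (f : Fin n → α) : Finset (Fin n) :=
  Finset.univ.filter (fun i : Fin n =>
    1 ≤ (i : ℕ) ∧ f i ≠ f ⟨(i : ℕ) - 1, Nat.lt_of_le_of_lt (Nat.sub_le _ _) i.isLt⟩)

theorem Fin.mem_changePoints {α : Type*} [DecidableEq α] {n : ℕ} {f : Fin n → α} {i : Fin n} :
    i ∈ changePoints f ↔
      1 ≤ (i : ℕ) ∧ f i ≠ f ⟨(i : ℕ) - 1, Nat.lt_of_le_of_lt (Nat.sub_le _ _) i.isLt⟩ := by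
  simp [changePoints]

namespace Monotone

open Fin

variable {α : Type*} [PartialOrder α] [DecidableEq α] {n : ℕ} {f : Fin n → α}

theorem lt_of_mem_changePoints (hf : Monotone f) {i j : Fin n} (hij : i < j)
    (hj : j ∈ changePoints f) : f i < f j := by
  obtain ⟨hj1, hne⟩ := mem_changePoints.mp hj
  have hpred : f i ≤ f ⟨(j : ℕ) - 1, by omega⟩ :=
    hf (Fin.le_def.mpr (show (i : ℕ) ≤ j - 1 by omega))
  have hstep : f ⟨(j : ℕ) - 1, by omega⟩ < f j :=
    (hf (Fin.le_def.mpr (Nat.sub_le _ _))).lt_of_ne hne.symm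
  exact hpred.trans_lt hstep

theorem strictMonoOn_insert_changePoints (hf : Monotone f) (hn : 1 ≤ n) :
    StrictMonoOn f (insert ⟨0, hn⟩ (changePoints f) : Finset (Fin n)) := by
  intro i _ j hj hij
  rcases Finset.mem_insert.mp hj with rfl | hj
  · exact absurd (Fin.lt_def.mp hij) (Nat.not_lt_zero _)
  · exact hf.lt_of_mem_changePoints hij hj

theorem card_changePoints_lt (hf : Monotone f) (hn : 1 ≤ n) {t : Finset α}
    (hft : ∀ i, f i ∈ t) : (changePoints f).card < t.card := by
  have hzero : (⟨0, hn⟩ : Fin n) ∉ changePoints f := fun h =>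
    absurd (mem_changePoints.mp h).1 (by simp)
  calc (changePoints f).card < (insert ⟨0, hn⟩ (changePoints f)).card :=
        Finset.card_lt_card (Finset.ssubset_insert hzero)
    _ ≤ t.card := Finset.card_le_card_of_injOn f (fun i _ => hft i)
        (hf.strictMonoOn_insert_changePoints hn).injOn

end Monotone

theorem winlose_matrix_column_changes_at_most_twice_general
    (n : ℕ) (hn : 1 ≤ n)
    {H₂ : Type*}
    (s₁ : Fin n → ℝ) (hmono : ∀ i i' : Fin n, i < i' → s₁ i ≤ s₁ i')
    (s₂ : H₂ → ℝ)
    (W : Matrix (Fin n) H₂ ℝ)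
    (hW : ∀ i h, W i h = Real.sign (s₁ i - s₂ h)) :
    ∀ h : H₂,
      (Finset.univ.filter (fun i : Fin n =>
        1 ≤ (i : ℕ) ∧
          W i h ≠ W ⟨(i : ℕ) - 1, Nat.lt_of_le_of_lt (Nat.sub_le _ _) i.isLt⟩ h)).card
        ≤ 2 := by
  intro h
  have hs₁ : Monotone s₁ := monotone_iff_forall_lt.mpr hmono
  have hcol : Monotone (fun i => W i h) := fun i j hij => by
    simpa only [hW] using Real.sign_monotone (sub_le_sub_right (hs₁ hij) (s₂ h))
  have hvals : ∀ i, W i h ∈ ({-1, 0, 1} : Finset ℝ) := fun i => by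
    simpa [hW] using Real.sign_apply_eq (s₁ i - s₂ h)
  have hcard : ({-1, 0, 1} : Finset ℝ).card = 3 := by norm_num
  have hchanges := Monotone.card_changePoints_lt hcol hn hvals
  rw [hcard] at hchanges
  exact Nat.le_of_lt_succ hchanges

/-- With the row player's hands sorted by strength, each column of the win-lose
matrix W changes value at most twice down the rows. -/
theorem winlose_matrix_column_changes_at_most_twice
    (n : ℕ) (hn : 1 ≤ n)
    {H₂ : Type*} [Fintype H₂]
    (s₁ : Fin n → ℝ) (hmono : ∀ i i' : Fin n, i < i' → s₁ i ≤ s₁ i')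
    (s₂ : H₂ → ℝ)
    (W : Matrix (Fin n) H₂ ℝ)
    (hW : ∀ i h, W i h = Real.sign (s₁ i - s₂ h)) :
    ∀ h : H₂,
      (Finset.univ.filter (fun i : Fin n =>
        1 ≤ (i : ℕ) ∧
          W i h ≠ W ⟨(i : ℕ) - 1, Nat.lt_of_le_of_lt (Nat.sub_le _ _) i.isLt⟩ h)).card
        ≤ 2 :=
  winlose_matrix_column_changes_at_most_twice_general n hn s₁ hmono s₂ W hW
end
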